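/- arXiv:1906.04921 — 8 statements merged into one kernel-verified Lean document; each statement's English description precedes it below -/
import Mathlib

section
/- Let f : ℝ → ℝ be continuous on a neighborhood of x₀ and differentiable at x₀. Then the limit as h → 0⁺ of (3/(2h³)) · ∫_{-h}^{h} t · f(x₀ + t) dt exists and equals f'(x₀) (the classical Lanczos derivative formula). -/
/-!
Write `f (x₀ + t) = f x₀ + t f'(x₀) + r t` with `r t = o(t)`. Against the odd weight `t`, the
constant term integrates to `0` over `[-h, h]` and the linear term to `f'(x₀) · 2h³/3`, which
the factor `3/(2h³)` normalises to `f'(x₀)`; the remainder `t r t = o(t²)` integrates to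
`o(h³)`.
-/

open Filter Topology intervalIntegral Asymptotics MeasureTheory Set
open scoped Interval

theorem abs_le_abs_of_mem_uIcc_neg_self {t h : ℝ} (ht : t ∈ [[-h, h]]) : |t| ≤ |h| := by
  rcases mem_uIcc.mp ht with ⟨h₁, h₂⟩ | ⟨h₁, h₂⟩ <;>
    exact abs_le.mpr ⟨by linarith [neg_abs_le h, le_abs_self h],
      by linarith [le_abs_self h, neg_le_abs h]⟩

theorem isLittleO_integral_neg_self_of_isLittleO_pow {E : Type*} [NormedAddCommGroup E]
    [NormedSpace ℝ E] {g : ℝ → E} {n : ℕ} (hg : g =o[𝓝 0] fun t => t ^ n) :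
    (fun h => ∫ t in (-h)..h, g t) =o[𝓝 0] fun h => h ^ (n + 1) := by
  refine IsLittleO.of_bound fun c hc => ?_
  obtain ⟨δ, hδ, hball⟩ := Metric.eventually_nhds_iff_ball.mp (hg.def (half_pos hc))
  filter_upwards [Metric.ball_mem_nhds 0 hδ] with h hh
  rw [mem_ball_zero_iff, Real.norm_eq_abs] at hh
  have hbound : ∀ t ∈ Ι (-h) h, ‖g t‖ ≤ c / 2 * |h| ^ n := by
    intro t ht
    have hth := abs_le_abs_of_mem_uIcc_neg_self (uIoc_subset_uIcc ht)
    calc ‖g t‖ ≤ c / 2 * ‖t ^ n‖ := hball t (by simpa using hth.trans_lt hh)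
      _ ≤ c / 2 * |h| ^ n := by
        rw [norm_pow, Real.norm_eq_abs]; gcongr
  calc ‖∫ t in (-h)..h, g t‖ ≤ c / 2 * |h| ^ n * |h - -h| :=
        norm_integral_le_of_norm_le_const hbound
    _ = c * ‖h ^ (n + 1)‖ := by
      rw [norm_pow, Real.norm_eq_abs, sub_neg_eq_add, ← two_mul, abs_mul, abs_two]; ring

theorem ContinuousOn.eventually_intervalIntegrable_comp_add {E : Type*} [NormedAddCommGroup E]
    {f : ℝ → E} {s : Set ℝ} {x₀ : ℝ} (hfc : ContinuousOn f s) (hs : s ∈ 𝓝 x₀) :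
    ∀ᶠ h in 𝓝 0, IntervalIntegrable (fun t => f (x₀ + t)) volume (-h) h := by
  obtain ⟨δ, hδ, hball⟩ := Metric.mem_nhds_iff.mp hs
  filter_upwards [Metric.ball_mem_nhds 0 hδ] with h hh
  rw [mem_ball_zero_iff, Real.norm_eq_abs] at hh
  refine (hfc.comp (continuousOn_const.add continuousOn_id) fun t ht => hball ?_).intervalIntegrable
  simpa using (abs_le_abs_of_mem_uIcc_neg_self ht).trans_lt hh

theorem HasDerivAt.isLittleO_mul_sub_sub {f : ℝ → ℝ} {f' x : ℝ} (hf : HasDerivAt f f' x) :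
    (fun t => t * (f (x + t) - f x - t * f')) =o[𝓝 0] fun t => t ^ 2 := by
  have hrem := hasDerivAt_iff_isLittleO_nhds_zero.mp hf
  simpa only [smul_eq_mul, sq] using (isBigO_refl (fun t : ℝ => t) _).mul_isLittleO hrem

theorem integral_neg_self_mul_affine (a b h : ℝ) :
    ∫ t in (-h)..h, t * (a + t * b) = b * (2 * h ^ 3 / 3) := by
  have hpoly : (fun t : ℝ => t * (a + t * b)) = fun t => a * t + b * t ^ 2 := by ext; ring
  rw [hpoly, intervalIntegral.integral_add ((continuous_const_mul a).intervalIntegrable _ _)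
    ((continuous_pow 2).const_mul b |>.intervalIntegrable _ _)]
  rw [intervalIntegral.integral_const_mul, intervalIntegral.integral_const_mul, integral_id,
    integral_pow]
  ring

theorem integral_neg_self_mul_eq_remainder_add {f : ℝ → ℝ} {x₀ a b h : ℝ}
    (hf : IntervalIntegrable (fun t => f (x₀ + t)) volume (-h) h) :
    ∫ t in (-h)..h, t * f (x₀ + t) =
      (∫ t in (-h)..h, t * (f (x₀ + t) - a - t * b)) + b * (2 * h ^ 3 / 3) := by
  have hsub : (fun t => t * (f (x₀ + t) - a - t * b)) =
      fun t => t * f (x₀ + t) - t * (a + t * b) := by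
    ext t; ring
  have hf' : IntervalIntegrable (fun t => t * f (x₀ + t)) volume (-h) h :=
    hf.continuousOn_mul continuousOn_id
  have hpoly : IntervalIntegrable (fun t => t * (a + t * b)) volume (-h) h :=
    (by fun_prop : Continuous _).intervalIntegrable _ _
  rw [hsub, intervalIntegral.integral_sub hf' hpoly, integral_neg_self_mul_affine]
  ring

/-- Classical Lanczos derivative formula: if `f` is continuous on a neighborhood of `x₀`
and differentiable at `x₀`, then `(3/(2h³)) ∫_{-h}^{h} t·f(x₀+t) dt → f'(x₀)` as `h → 0⁺`. -/
theorem lanczos_first_derivative (f : ℝ → ℝ) (x₀ : ℝ) (s : Set ℝ) (hs : s ∈ 𝓝 x₀)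
    (hfc : ContinuousOn f s) (hdf : DifferentiableAt ℝ f x₀) :
    Tendsto (fun h : ℝ => (3 / (2 * h ^ 3)) * ∫ t in (-h)..h, t * f (x₀ + t))
      (𝓝[>] (0 : ℝ)) (𝓝 (deriv f x₀)) := by
  set d := deriv f x₀
  set remainder := fun h => ∫ t in (-h)..h, t * (f (x₀ + t) - f x₀ - t * d)
  have hrem : remainder =o[𝓝[>] 0] fun h => h ^ 3 :=
    (isLittleO_integral_neg_self_of_isLittleO_pow hdf.hasDerivAt.isLittleO_mul_sub_sub).mono
      nhdsWithin_le_nhds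
  have hsplit : ∀ᶠ h in 𝓝[>] 0,
      3 / 2 * (remainder h / h ^ 3) + d =
        (3 / (2 * h ^ 3)) * ∫ t in (-h)..h, t * f (x₀ + t) := by
    filter_upwards [nhdsWithin_le_nhds (hfc.eventually_intervalIntegrable_comp_add hs),
      self_mem_nhdsWithin] with h hint (hh : 0 < h)
    rw [integral_neg_self_mul_eq_remainder_add (a := f x₀) (b := d) hint]
    change _ = 3 / (2 * h ^ 3) * (remainder h + d * (2 * h ^ 3 / 3))
    field_simp
  refine Tendsto.congr' hsplit ?_
  simpa using (hrem.tendsto_div_nhds_zero.const_mul (3 / 2)).add_const d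
end

section
/- Let w : ℝ → ℝ be continuously differentiable on [-1,1] with w(−1) = w(1) = 0 and ∫_{-1}^{1} w(t) dt = 1, and let f : ℝ → ℝ be continuously differentiable. Then for every x₀ ∈ ℝ, the limit as h → 0⁺ of −(1/h) ∫_{-1}^{1} w'(t) f(x₀ + h t) dt exists and equals f'(x₀). -/
/-!
Integrating by parts, with the boundary terms killed by `w (-1) = w 1 = 0`, turns
`-(1/h) ∫ w' t f (x₀ + h t) dt` into `∫ w t f' (x₀ + h t) dt`. As `h → 0` this tends to
`f' x₀ ∫ w = f' x₀` by continuity of the parametric integral, since `f'` is continuous.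
-/

open Filter Topology intervalIntegral Set

theorem integral_deriv_mul_comp_affine_eq_neg {a b x₀ h : ℝ} {w w' f : ℝ → ℝ}
    (hw : ∀ t ∈ uIcc a b, HasDerivWithinAt w (w' t) (uIcc a b) t)
    (hw' : IntervalIntegrable w' MeasureTheory.volume a b) (hwa : w a = 0) (hwb : w b = 0)
    (hf : ContDiff ℝ 1 f) :
    ∫ t in a..b, w' t * f (x₀ + h * t) = -(h * ∫ t in a..b, w t * deriv f (x₀ + h * t)) := by
  have hf' : Continuous (deriv f) := hf.continuous_deriv le_rfl
  have hv : ∀ t, HasDerivAt (fun t => f (x₀ + h * t)) (h * deriv f (x₀ + h * t)) t := fun t => by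
    have hinner : HasDerivAt (fun t => x₀ + h * t) h t := by
      simpa using ((hasDerivAt_id t).const_mul h).const_add x₀
    rw [mul_comm]
    exact (hf.differentiable one_ne_zero _).hasDerivAt.comp t hinner
  have hparts := integral_mul_deriv_eq_deriv_mul_of_hasDerivWithinAt hw
    (fun t _ => (hv t).hasDerivWithinAt) hw'
    ((continuous_const.mul (hf'.comp (by fun_prop))).intervalIntegrable _ _)
  simp only [hwa, hwb, zero_mul, sub_zero, zero_sub] at hparts
  simp_rw [mul_left_comm (w _), integral_const_mul] at hparts
  linarith

theorem tendsto_integral_mul_comp_affine {a b : ℝ} {w g : ℝ → ℝ}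
    (hw : ContinuousOn w (uIcc a b)) (hg : Continuous g) (x₀ : ℝ) :
    Tendsto (fun h => ∫ t in a..b, w t * g (x₀ + h * t)) (𝓝 0)
      (𝓝 ((∫ t in a..b, w t) * g x₀)) := by
  -- A continuous extension of `w` to all of `ℝ` makes the integrand jointly continuous.
  set W := IccExtend inf_le_sup ((uIcc a b).domRestrict w)
  have hWc : Continuous W :=
    continuous_IccExtend_iff.2 (continuousOn_iff_continuous_domRestrict.1 hw)
  have hWw : EqOn W w (uIcc a b) := fun t ht => IccExtend_of_mem _ _ ht
  have hcont : Continuous fun h => ∫ t in a..b, W t * g (x₀ + h * t) :=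
    continuous_parametric_intervalIntegral_of_continuous' (by fun_prop) a b
  have hlim := hcont.tendsto 0
  simp only [zero_mul, add_zero, integral_mul_const, integral_congr hWw] at hlim
  exact hlim.congr fun h => integral_congr fun t ht => by simp only [hWw ht]

/-- First-order differentiation by integration: if `w` is continuously differentiable on
`[-1,1]` (with derivative `w'`), vanishes at `±1`, and has total integral `1`, then for
continuously differentiable `f`,
`−(1/h) ∫_{-1}^{1} w'(t) f(x₀+ht) dt → f'(x₀)` as `h → 0⁺`. -/
theorem lanczos_general_first_derivative (w w' f : ℝ → ℝ)
    (hw : ∀ t ∈ Icc (-1 : ℝ) 1, HasDerivWithinAt w (w' t) (Icc (-1 : ℝ) 1) t)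
    (hw' : ContinuousOn w' (Icc (-1 : ℝ) 1))
    (hwm : w (-1) = 0) (hwp : w 1 = 0)
    (hint : ∫ t in (-1 : ℝ)..1, w t = 1)
    (hf : ContDiff ℝ 1 f) (x₀ : ℝ) :
    Tendsto (fun h : ℝ => -(1 / h) * ∫ t in (-1 : ℝ)..1, w' t * f (x₀ + h * t))
      (𝓝[>] (0 : ℝ)) (𝓝 (deriv f x₀)) := by
  have hIcc : uIcc (-1 : ℝ) 1 = Icc (-1) 1 := uIcc_of_le (by norm_num)
  rw [← hIcc] at hw hw'
  have hlim := tendsto_integral_mul_comp_affine (fun t ht => (hw t ht).continuousWithinAt)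
    (hf.continuous_deriv le_rfl) x₀
  rw [hint, one_mul] at hlim
  refine (hlim.mono_left nhdsWithin_le_nhds).congr' ?_
  filter_upwards [self_mem_nhdsWithin] with h (hh : 0 < h)
  rw [integral_deriv_mul_comp_affine_eq_neg hw hw'.intervalIntegrable hwm hwp hf]
  field_simp
end

section
/- Let k : ℝ → ℝ be continuous on [-1,1] and suppose that for every continuously differentiable f : ℝ → ℝ and every x₀ ∈ ℝ, the limit as h → 0⁺ of −(1/h) ∫_{-1}^{1} k(t) f(x₀ + h t) dt equals f'(x₀). Then ∫_{-1}^{1} k(t) dt = 0 and ∫_{-1}^{1} t · k(t) dt = −1. -/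
open Filter Topology intervalIntegral Set

/-! Test the kernel against `f ≡ 1` and `f = id` at `x₀ = 0`. The first quotient is
`-(∫ k) / h`, which converges as `h → 0⁺` only if `∫ k = 0`; the second is the constant
`-∫ t k(t) dt`, which must equal `id' 0 = 1`. -/

theorem eq_zero_of_tendsto_div_nhdsGT_zero {c L : ℝ}
    (h : Tendsto (fun x : ℝ => c / x) (𝓝[>] 0) (𝓝 L)) : c = 0 := by
  have hmul : Tendsto (fun x : ℝ => x * (c / x)) (𝓝[>] 0) (𝓝 (0 * L)) :=
    (tendsto_id.mono_left nhdsWithin_le_nhds).mul h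
  have hcancel : (fun x : ℝ => x * (c / x)) =ᶠ[𝓝[>] 0] fun _ => c := by
    filter_upwards [self_mem_nhdsWithin] with x hx
    exact mul_div_cancel₀ c (ne_of_gt hx)
  rw [zero_mul] at hmul
  exact tendsto_nhds_unique (hmul.congr' hcancel) tendsto_const_nhds |>.symm

theorem eq_of_tendsto_div_mul_nhdsGT_zero {m L : ℝ}
    (h : Tendsto (fun x : ℝ => (x * m) / x) (𝓝[>] 0) (𝓝 L)) : m = L := by
  have hcancel : (fun _ => m) =ᶠ[𝓝[>] (0 : ℝ)] fun x => (x * m) / x := by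
    filter_upwards [self_mem_nhdsWithin] with x hx
    exact (mul_div_cancel_left₀ m (ne_of_gt hx)).symm
  exact tendsto_nhds_unique (tendsto_const_nhds.congr' hcancel) h

theorem integral_mul_const_mul (k : ℝ → ℝ) (a b h : ℝ) :
    ∫ t in a..b, k t * (h * t) = h * ∫ t in a..b, t * k t := by
  rw [← integral_const_mul]
  congr 1 with t
  ring

theorem first_order_kernel_moments_general (k : ℝ → ℝ)
    (hker : ∀ f : ℝ → ℝ, ContDiff ℝ 1 f → ∀ x₀ : ℝ,
      Tendsto (fun h : ℝ => -(1 / h) * ∫ t in (-1 : ℝ)..1, k t * f (x₀ + h * t))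
        (𝓝[>] (0 : ℝ)) (𝓝 (deriv f x₀))) :
    (∫ t in (-1 : ℝ)..1, k t) = 0 ∧ (∫ t in (-1 : ℝ)..1, t * k t) = -1 := by
  have hconst := hker (fun _ => 1) contDiff_const 0
  have hlin := hker id contDiff_id 0
  simp only [mul_one, deriv_const'] at hconst
  simp only [id, zero_add, integral_mul_const_mul, deriv_id] at hlin
  have hneg_mass := eq_zero_of_tendsto_div_nhdsGT_zero <|
    hconst.congr fun h => show _ = -(∫ t in (-1 : ℝ)..1, k t) / h by ring
  have hneg_moment := eq_of_tendsto_div_mul_nhdsGT_zero <|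
    hlin.congr fun h => show _ = (h * -∫ t in (-1 : ℝ)..1, t * k t) / h by ring
  exact ⟨neg_eq_zero.mp hneg_mass, by linarith⟩

/-- Necessary moment conditions on a first-order kernel: if `k` is continuous on `[-1,1]`
and `−(1/h) ∫_{-1}^{1} k(t) f(x₀+ht) dt → f'(x₀)` as `h → 0⁺` for every continuously
differentiable `f` and every `x₀`, then `∫_{-1}^{1} k = 0` and `∫_{-1}^{1} t·k(t) dt = −1`. -/
theorem first_order_kernel_moments (k : ℝ → ℝ)
    (hk : ContinuousOn k (Icc (-1 : ℝ) 1))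
    (hker : ∀ f : ℝ → ℝ, ContDiff ℝ 1 f → ∀ x₀ : ℝ,
      Tendsto (fun h : ℝ => -(1 / h) * ∫ t in (-1 : ℝ)..1, k t * f (x₀ + h * t))
        (𝓝[>] (0 : ℝ)) (𝓝 (deriv f x₀))) :
    (∫ t in (-1 : ℝ)..1, k t) = 0 ∧ (∫ t in (-1 : ℝ)..1, t * k t) = -1 :=
  first_order_kernel_moments_general k hker
end

section
/- Let n ≥ 1, let w : ℝ → ℝ be n times continuously differentiable on [-1,1] with w⁽ᵏ⁾(−1) = w⁽ᵏ⁾(1) = 0 for every k = 0, 1, …, n−1 and ∫_{-1}^{1} w(t) dt = 1, and let f : ℝ → ℝ be n times continuously differentiable. Then for every x₀ ∈ ℝ, the limit as h → 0⁺ of (−1/h)ⁿ ∫_{-1}^{1} w⁽ⁿ⁾(t) f(x₀ + h t) dt exists and equals f⁽ⁿ⁾(x₀). -/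
/-!
Integrating by parts `n` times moves all derivatives from `w` onto `t ↦ f (x₀ + h t)`; the
boundary terms vanish because `w⁽ᵏ⁾(±1) = 0` for `k < n`, and each derivative of the
rescaled `f` contributes a factor `h`. Hence for `h > 0` the expression equals
`∫ w(t) f⁽ⁿ⁾(x₀ + h t) dt`, which tends to `(∫ w) f⁽ⁿ⁾(x₀) = f⁽ⁿ⁾(x₀)` by dominated convergence.
-/

open Filter Topology intervalIntegral Set MeasureTheory
open scoped Interval

theorem ContDiffOn.hasDerivAt_iteratedDerivWithin_Icc {u : ℝ → ℝ} {a b t : ℝ} {m : ℕ}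
    (hu : ContDiffOn ℝ (m + 1) u (Icc a b)) (ht : t ∈ Ioo a b) :
    HasDerivAt (iteratedDerivWithin m u (Icc a b))
      (iteratedDerivWithin (m + 1) u (Icc a b) t) t := by
  have hd := hu.differentiableOn_iteratedDerivWithin (m := m) (by norm_cast; omega)
    (uniqueDiffOn_Icc (ht.1.trans ht.2)) t (Ioo_subset_Icc_self ht)
  rw [iteratedDerivWithin_succ]
  exact hd.hasDerivWithinAt.hasDerivAt (Icc_mem_nhds ht.1 ht.2)

theorem integral_deriv_mul_eq_neg_integral_mul_deriv {u u' v v' : ℝ → ℝ} {a b : ℝ}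
    (hu : ContinuousOn u [[a, b]]) (hv : ContinuousOn v [[a, b]])
    (huu' : ∀ x ∈ Ioo (min a b) (max a b), HasDerivAt u (u' x) x)
    (hvv' : ∀ x ∈ Ioo (min a b) (max a b), HasDerivAt v (v' x) x)
    (hu' : IntervalIntegrable u' volume a b) (hv' : IntervalIntegrable v' volume a b)
    (hua : u a = 0) (hub : u b = 0) :
    ∫ x in a..b, u' x * v x = -∫ x in a..b, u x * v' x := by
  rw [integral_mul_deriv_eq_deriv_mul_of_hasDerivAt hu hv huu' hvv' hu' hv', hua, hub]
  simp

theorem integral_iteratedDerivWithin_mul_eq {u g : ℝ → ℝ} {a b : ℝ} (hab : a < b) {m : ℕ}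
    (hu : ContDiffOn ℝ m u (Icc a b))
    (hvanish : ∀ k < m, iteratedDerivWithin k u (Icc a b) a = 0 ∧
      iteratedDerivWithin k u (Icc a b) b = 0)
    (hg : ContDiff ℝ m g) :
    ∫ t in a..b, iteratedDerivWithin m u (Icc a b) t * g t =
      (-1) ^ m * ∫ t in a..b, u t * iteratedDeriv m g t := by
  induction m generalizing g with
  | zero => simp
  | succ m ih =>
    have huIcc : [[a, b]] = Icc a b := uIcc_of_le hab.le
    have hs := uniqueDiffOn_Icc hab
    have hcont (k : ℕ) (hk : k ≤ m + 1) :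
        ContinuousOn (iteratedDerivWithin k u (Icc a b)) [[a, b]] := by
      rw [huIcc]; exact hu.continuousOn_iteratedDerivWithin (by exact_mod_cast hk) hs
    have hg' : ContDiff ℝ m (deriv g) := hg.deriv'
    rw [integral_deriv_mul_eq_neg_integral_mul_deriv (hcont m (by omega))
        hg.continuous.continuousOn (fun t ht => ?_) (fun t _ => ?_)
        (hcont _ le_rfl).intervalIntegrable
        (hg'.continuous.intervalIntegrable a b) (hvanish m (by omega)).1 (hvanish m (by omega)).2,
      ih (hu.of_le (by norm_cast; omega)) (fun k hk => hvanish k (by omega)) hg',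
      iteratedDeriv_succ', pow_succ]
    · ring
    · rw [min_eq_left hab.le, max_eq_right hab.le] at ht
      exact hu.hasDerivAt_iteratedDerivWithin_Icc ht
    · exact (hg.differentiable (by simp)).differentiableAt.hasDerivAt

theorem iteratedDeriv_comp_const_add_const_mul {𝕜 : Type*} [NontriviallyNormedField 𝕜]
    {n : ℕ} {f : 𝕜 → 𝕜} (hf : ContDiff 𝕜 n f) (x₀ c t : 𝕜) :
    iteratedDeriv n (fun s => f (x₀ + c * s)) t = c ^ n * iteratedDeriv n f (x₀ + c * t) := by
  rw [iteratedDeriv_comp_const_mul (f := fun z => f (x₀ + z)) (by fun_prop),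
    iteratedDeriv_comp_const_add]

theorem tendsto_integral_mul_comp_add_mul {w φ : ℝ → ℝ} {a b : ℝ}
    (hw : IntervalIntegrable w volume a b) (hφ : Continuous φ) (x₀ : ℝ) :
    Tendsto (fun h => ∫ t in a..b, w t * φ (x₀ + h * t)) (𝓝 0)
      (𝓝 ((∫ t in a..b, w t) * φ x₀)) := by
  have hK :
      IsCompact ((fun p : ℝ × ℝ => x₀ + p.1 * p.2) '' (Metric.closedBall 0 1 ×ˢ [[a, b]])) :=
    ((isCompact_closedBall 0 1).prod isCompact_uIcc).image (by fun_prop)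
  obtain ⟨C, hC⟩ := hK.exists_bound_of_continuousOn hφ.continuousOn
  have hcont : ContinuousAt (fun h => ∫ t in a..b, w t * φ (x₀ + h * t)) 0 := by
    refine continuousAt_of_dominated_interval (bound := fun t => ‖w t‖ * C)
      (Eventually.of_forall fun h => ?_) ?_ (hw.norm.mul_const C) (ae_of_all _ fun t _ => ?_)
    · exact hw.def'.aestronglyMeasurable.mul (by fun_prop : Continuous _).aestronglyMeasurable
    · filter_upwards [Metric.closedBall_mem_nhds (0 : ℝ) one_pos] with h hh
      refine ae_of_all _ fun t ht => ?_
      rw [norm_mul]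
      exact mul_le_mul_of_nonneg_left
        (hC _ (mem_image_of_mem _ (mk_mem_prod hh (uIoc_subset_uIcc ht)))) (norm_nonneg _)
    · fun_prop
  simpa [intervalIntegral.integral_mul_const] using hcont.tendsto

theorem lanczos_general_nth_derivative_general (n : ℕ) (w f : ℝ → ℝ)
    (hw : ContDiffOn ℝ (n : ℕ∞) w (Icc (-1 : ℝ) 1))
    (hvanish : ∀ k < n, iteratedDerivWithin k w (Icc (-1 : ℝ) 1) (-1) = 0 ∧
      iteratedDerivWithin k w (Icc (-1 : ℝ) 1) 1 = 0)
    (hint : ∫ t in (-1 : ℝ)..1, w t = 1)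
    (hf : ContDiff ℝ (n : ℕ∞) f) (x₀ : ℝ) :
    Tendsto (fun h : ℝ => (-1 / h) ^ n *
        ∫ t in (-1 : ℝ)..1, iteratedDerivWithin n w (Icc (-1 : ℝ) 1) t * f (x₀ + h * t))
      (𝓝[>] (0 : ℝ)) (𝓝 (iteratedDeriv n f x₀)) := by
  have hlim := tendsto_integral_mul_comp_add_mul
    (hw.continuousOn.intervalIntegrable_of_Icc (by norm_num))
    (hf.continuous_iteratedDeriv n le_rfl) x₀
  rw [hint, one_mul] at hlim
  refine (hlim.mono_left nhdsWithin_le_nhds).congr' ?_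
  filter_upwards [self_mem_nhdsWithin] with h (hh : 0 < h)
  have hg : ContDiff ℝ n (fun t => f (x₀ + h * t)) := by fun_prop
  simp_rw [integral_iteratedDerivWithin_mul_eq (by norm_num) hw hvanish hg,
    iteratedDeriv_comp_const_add_const_mul hf, mul_left_comm (w _),
    intervalIntegral.integral_const_mul, ← mul_assoc, ← mul_pow]
  field_simp
  simp

/-- n-th order differentiation by integration: if `w` is n-times continuously differentiable
on `[-1,1]` with `w⁽ᵏ⁾(±1) = 0` for all `k < n` and `∫_{-1}^{1} w = 1`, then for every
n-times continuously differentiable `f`,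
`(−1/h)ⁿ ∫_{-1}^{1} w⁽ⁿ⁾(t) f(x₀+ht) dt → f⁽ⁿ⁾(x₀)` as `h → 0⁺`. -/
theorem lanczos_general_nth_derivative (n : ℕ) (hn : 1 ≤ n) (w f : ℝ → ℝ)
    (hw : ContDiffOn ℝ (n : ℕ∞) w (Icc (-1 : ℝ) 1))
    (hvanish : ∀ k < n, iteratedDerivWithin k w (Icc (-1 : ℝ) 1) (-1) = 0 ∧
      iteratedDerivWithin k w (Icc (-1 : ℝ) 1) 1 = 0)
    (hint : ∫ t in (-1 : ℝ)..1, w t = 1)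
    (hf : ContDiff ℝ (n : ℕ∞) f) (x₀ : ℝ) :
    Tendsto (fun h : ℝ => (-1 / h) ^ n *
        ∫ t in (-1 : ℝ)..1, iteratedDerivWithin n w (Icc (-1 : ℝ) 1) t * f (x₀ + h * t))
      (𝓝[>] (0 : ℝ)) (𝓝 (iteratedDeriv n f x₀)) :=
  lanczos_general_nth_derivative_general n w f hw hvanish hint hf x₀
end

section
/- Let n ≥ 1 and let k : ℝ → ℝ be continuous on [-1,1]. Suppose that for every infinitely differentiable f : ℝ → ℝ and every x₀ ∈ ℝ, the limit as h → 0⁺ of (−1/h)ⁿ ∫_{-1}^{1} k(t) f(x₀ + h t) dt equals f⁽ⁿ⁾(x₀). Then ∫_{-1}^{1} tʲ k(t) dt = 0 for every integer j with 0 ≤ j ≤ n−1, and ∫_{-1}^{1} tⁿ k(t) dt = (−1)ⁿ · n!. -/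
open Filter Topology intervalIntegral Set

/-! Testing the kernel on the monomial `f = xʲ` at `x₀ = 0` gives
`(−1/h)ⁿ hʲ ∫ tʲ k(t) dt → f⁽ⁿ⁾(0)`, which is `n!` for `j = n` and `0` otherwise.
For `j = n` the left side is the constant `(−1)ⁿ ∫ tⁿ k(t) dt`; for `j < n` it is that
constant divided by `hⁿ⁻ʲ`, so it can only converge if the moment vanishes. -/

lemma integral_mul_mul_pow (k : ℝ → ℝ) (a b h : ℝ) (j : ℕ) :
    ∫ t in a..b, k t * (h * t) ^ j = h ^ j * ∫ t in a..b, t ^ j * k t := by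
  rw [← integral_const_mul]
  congr 1 with t
  ring

lemma neg_one_pow_mul_eq_of_tendsto {n j : ℕ} (hj : j ≤ n) {M L : ℝ}
    (hlim : Tendsto (fun h : ℝ => (-1 / h) ^ n * (h ^ j * M)) (𝓝[>] 0) (𝓝 L)) :
    (-1) ^ n * M = L * 0 ^ (n - j) := by
  have hpow : Tendsto (fun h : ℝ => h ^ (n - j)) (𝓝[>] 0) (𝓝 (0 ^ (n - j))) :=
    ((continuous_pow _).tendsto 0).mono_left nhdsWithin_le_nhds
  have hconst : (fun h : ℝ => (-1 / h) ^ n * (h ^ j * M) * h ^ (n - j))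
      =ᶠ[𝓝[>] 0] fun _ => (-1) ^ n * M := by
    filter_upwards [self_mem_nhdsWithin] with h (hh : 0 < h)
    calc (-1 / h) ^ n * (h ^ j * M) * h ^ (n - j)
          = (-1) ^ n * M * (h ^ j * h ^ (n - j)) / h ^ n := by ring
      _ = (-1) ^ n * M := by
          rw [← pow_add, Nat.add_sub_cancel' hj, mul_div_cancel_right₀ _ (pow_ne_zero _ hh.ne')]
  exact tendsto_nhds_unique ((hlim.mul hpow).congr' hconst) tendsto_const_nhds |>.symm

theorem nth_order_kernel_moments_general (n : ℕ) (k : ℝ → ℝ)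
    (hker : ∀ f : ℝ → ℝ, ContDiff ℝ (⊤ : ℕ∞) f → ∀ x₀ : ℝ,
      Tendsto (fun h : ℝ => (-1 / h) ^ n * ∫ t in (-1 : ℝ)..1, k t * f (x₀ + h * t))
        (𝓝[>] (0 : ℝ)) (𝓝 (iteratedDeriv n f x₀))) :
    (∀ j < n, (∫ t in (-1 : ℝ)..1, t ^ j * k t) = 0) ∧
      (∫ t in (-1 : ℝ)..1, t ^ n * k t) = (-1 : ℝ) ^ n * n.factorial := by
  have hmoment : ∀ j ≤ n, (-1) ^ n * ∫ t in (-1 : ℝ)..1, t ^ j * k t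
      = (if n = j then (j.factorial : ℝ) else 0) * 0 ^ (n - j) := by
    intro j hj
    refine neg_one_pow_mul_eq_of_tendsto hj ?_
    have hmono := hker (· ^ j) (contDiff_id.pow j) 0
    simpa only [iteratedDeriv_fun_pow_zero, Nat.cast_ite, Nat.cast_zero, zero_add,
      integral_mul_mul_pow] using hmono
  refine ⟨fun j hj => ?_, ?_⟩
  · simpa [hj.ne'] using hmoment j hj.le
  · have hn := hmoment n le_rfl
    simp only [if_pos, Nat.sub_self, pow_zero, mul_one] at hn
    rw [← hn, ← mul_assoc, ← mul_pow]
    norm_num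

/-- Necessary moment conditions on an n-th order kernel: if `k` is continuous on `[-1,1]`
and `(−1/h)ⁿ ∫_{-1}^{1} k(t) f(x₀+ht) dt → f⁽ⁿ⁾(x₀)` as `h → 0⁺` for every smooth `f`
and every `x₀`, then `∫_{-1}^{1} tʲ k(t) dt = 0` for `0 ≤ j ≤ n−1` and
`∫_{-1}^{1} tⁿ k(t) dt = (−1)ⁿ n!`. -/
theorem nth_order_kernel_moments (n : ℕ) (hn : 1 ≤ n) (k : ℝ → ℝ)
    (hk : ContinuousOn k (Icc (-1 : ℝ) 1))
    (hker : ∀ f : ℝ → ℝ, ContDiff ℝ (⊤ : ℕ∞) f → ∀ x₀ : ℝ,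
      Tendsto (fun h : ℝ => (-1 / h) ^ n * ∫ t in (-1 : ℝ)..1, k t * f (x₀ + h * t))
        (𝓝[>] (0 : ℝ)) (𝓝 (iteratedDeriv n f x₀))) :
    (∀ j < n, (∫ t in (-1 : ℝ)..1, t ^ j * k t) = 0) ∧
      (∫ t in (-1 : ℝ)..1, t ^ n * k t) = (-1 : ℝ) ^ n * n.factorial :=
  nth_order_kernel_moments_general n k hker
end

section
/- Let K = ∫_{-1}^{1} exp(1/(t² − 1)) dt and define w_e : ℝ → ℝ by w_e(t) = exp(1/(t² − 1)) for |t| < 1 and w_e(t) = 0 for |t| ≥ 1. Then for every n ≥ 1, every n times continuously differentiable f : ℝ → ℝ, and every x₀ ∈ ℝ, the limit as h → 0⁺ of (−1/h)ⁿ · (1/K) · ∫_{-1}^{1} w_e⁽ⁿ⁾(t) f(x₀ + h t) dt exists and equals f⁽ⁿ⁾(x₀). -/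
/-!
Integrating by parts `n` times moves every derivative from the weight onto `t ↦ f (x₀ + h t)`,
each time producing a factor `-h`. The boundary terms vanish: the bump
`w_e t = expNegInvGlue (1 - t²)` is smooth and identically zero outside `(-1, 1)`, so all its
derivatives vanish at `±1`. What remains is
`(1/K) ∫ w_e(t) f⁽ⁿ⁾(x₀ + h t) dt`, which is continuous in `h` and equals `f⁽ⁿ⁾(x₀)` at `h = 0`.
-/

open Filter Topology intervalIntegral
open scoped ContDiff

theorem iteratedDeriv_eq_zero_of_eqOn_zero {𝕜 F : Type*} [NontriviallyNormedField 𝕜]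
    [NormedAddCommGroup F] [NormedSpace 𝕜 F] {f : 𝕜 → F} {s : Set 𝕜} {x : 𝕜} {n : ℕ}
    (hs : UniqueDiffOn 𝕜 s) (hf : ContDiffAt 𝕜 n f x) (hf₀ : Set.EqOn f 0 s) (hx : x ∈ s) :
    iteratedDeriv n f x = 0 := by
  rw [← iteratedDerivWithin_eq_iteratedDeriv hs hf hx, iteratedDerivWithin_congr hf₀ hx]
  simp [Pi.zero_def]

theorem contDiff_one_iteratedDeriv {u : ℝ → ℝ} {n : ℕ} (hu : ContDiff ℝ (n + 1 : ℕ) u) :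
    ContDiff ℝ 1 (iteratedDeriv n u) :=
  contDiff_one_iff_deriv.2 ⟨hu.differentiable_iteratedDeriv' n,
    by rw [← iteratedDeriv_succ]; exact hu.continuous_iteratedDeriv' _⟩

theorem iteratedDeriv_comp_const_add_mul {f : ℝ → ℝ} {n : ℕ} (hf : ContDiff ℝ n f) (x₀ h : ℝ) :
    iteratedDeriv n (fun t ↦ f (x₀ + h * t)) =
      fun t ↦ h ^ n * iteratedDeriv n f (x₀ + h * t) := by
  simpa [iteratedDeriv_comp_const_add] using
    iteratedDeriv_comp_const_mul (f := fun y ↦ f (x₀ + y)) (hf.comp (by fun_prop)) h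

theorem integral_deriv_mul_eq_neg_integral_mul_deriv_s9 {u g : ℝ → ℝ} {a b : ℝ}
    (hu : ContDiff ℝ 1 u) (hg : ContDiff ℝ 1 g) (ha : u a = 0) (hb : u b = 0) :
    ∫ t in a..b, deriv u t * g t = -∫ t in a..b, u t * deriv g t := by
  rw [integral_mul_deriv_eq_deriv_mul (fun t _ ↦ (hu.differentiable one_ne_zero t).hasDerivAt)
    (fun t _ ↦ (hg.differentiable one_ne_zero t).hasDerivAt)
    (hu.continuous_deriv_one.intervalIntegrable a b)
    (hg.continuous_deriv_one.intervalIntegrable a b), ha, hb]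
  simp

theorem integral_iteratedDeriv_mul_eq_neg_one_pow_mul {u g : ℝ → ℝ} {a b : ℝ} (n : ℕ)
    (hu : ContDiff ℝ n u) (hg : ContDiff ℝ n g)
    (ha : ∀ k < n, iteratedDeriv k u a = 0) (hb : ∀ k < n, iteratedDeriv k u b = 0) :
    ∫ t in a..b, iteratedDeriv n u t * g t =
      (-1) ^ n * ∫ t in a..b, u t * iteratedDeriv n g t := by
  induction n generalizing g with
  | zero => simp
  | succ n ih =>
    calc ∫ t in a..b, iteratedDeriv (n + 1) u t * g t
        = -∫ t in a..b, iteratedDeriv n u t * deriv g t := by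
          rw [iteratedDeriv_succ]
          exact integral_deriv_mul_eq_neg_integral_mul_deriv_s9 (contDiff_one_iteratedDeriv hu)
            (hg.of_le (mod_cast Nat.le_add_left 1 n)) (ha n n.lt_succ_self) (hb n n.lt_succ_self)
      _ = (-1) ^ (n + 1) * ∫ t in a..b, u t * iteratedDeriv (n + 1) g t := by
          rw [ih (hu.of_le (mod_cast n.le_succ)) hg.deriv'
            (fun k hk ↦ ha k (hk.trans n.lt_succ_self))
            (fun k hk ↦ hb k (hk.trans n.lt_succ_self)), iteratedDeriv_succ']
          ring

theorem tendsto_integral_mul_comp_const_add_mul {w F : ℝ → ℝ} (hw : Continuous w)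
    (hF : Continuous F) (a b x₀ : ℝ) :
    Tendsto (fun h ↦ ∫ t in a..b, w t * F (x₀ + h * t)) (𝓝 0)
      (𝓝 ((∫ t in a..b, w t) * F x₀)) := by
  have : Continuous fun h ↦ ∫ t in a..b, w t * F (x₀ + h * t) :=
    continuous_parametric_intervalIntegral_of_continuous' (by fun_prop) a b
  simpa [integral_mul_const] using this.tendsto 0

theorem tendsto_neg_one_div_pow_mul_integral_iteratedDeriv_mul {w f : ℝ → ℝ} {a b : ℝ} {n : ℕ}
    (hw : ContDiff ℝ n w) (ha : ∀ k < n, iteratedDeriv k w a = 0)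
    (hb : ∀ k < n, iteratedDeriv k w b = 0) (hf : ContDiff ℝ n f) (x₀ : ℝ) :
    Tendsto (fun h ↦ (-1 / h) ^ n * ∫ t in a..b, iteratedDeriv n w t * f (x₀ + h * t))
      (𝓝[≠] 0) (𝓝 ((∫ t in a..b, w t) * iteratedDeriv n f x₀)) := by
  have hibp (h : ℝ) : ∫ t in a..b, iteratedDeriv n w t * f (x₀ + h * t) =
      (-h) ^ n * ∫ t in a..b, w t * iteratedDeriv n f (x₀ + h * t) := by
    rw [integral_iteratedDeriv_mul_eq_neg_one_pow_mul (g := fun t ↦ f (x₀ + h * t)) n hw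
      (hf.comp (by fun_prop)) ha hb, iteratedDeriv_comp_const_add_mul hf, neg_pow,
      ← integral_const_mul, ← integral_const_mul]
    congr 1 with t
    ring
  refine ((tendsto_integral_mul_comp_const_add_mul hw.continuous
    (hf.continuous_iteratedDeriv' n) a b x₀).mono_left nhdsWithin_le_nhds).congr'
    (eventually_mem_nhdsWithin.mono fun h (hh : h ≠ 0) ↦ ?_)
  dsimp only
  rw [hibp h, ← mul_assoc, ← mul_pow, show -1 / h * -h = 1 by field_simp, one_pow, one_mul]

theorem eq_expNegInvGlue_one_sub_sq {w : ℝ → ℝ}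
    (h₁ : ∀ t : ℝ, |t| < 1 → w t = Real.exp (1 / (t ^ 2 - 1)))
    (h₂ : ∀ t : ℝ, 1 ≤ |t| → w t = 0) :
    w = fun t ↦ expNegInvGlue (1 - t ^ 2) := by
  funext t
  rcases lt_or_ge |t| 1 with ht | ht
  · have : 0 < 1 - t ^ 2 := by nlinarith [sq_abs t, abs_nonneg t]
    rw [h₁ t ht, expNegInvGlue, if_neg this.not_ge, one_div, ← inv_neg, neg_sub]
  · rw [h₂ t ht, expNegInvGlue.zero_of_nonpos (by nlinarith [sq_abs t, abs_nonneg t])]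

/-- The normalized bump function `w_e/K` is a universal weight for differentiation by
integration: for every `n ≥ 1`, every n-times continuously differentiable `f`, and every `x₀`,
`(−1/h)ⁿ (1/K) ∫_{-1}^{1} w_e⁽ⁿ⁾(t) f(x₀+ht) dt → f⁽ⁿ⁾(x₀)` as `h → 0⁺`,
where `K = ∫_{-1}^{1} exp(1/(t²−1)) dt`. -/
theorem bump_weight_nth_derivative (w_e : ℝ → ℝ) (K : ℝ)
    (hK : K = ∫ t in (-1 : ℝ)..1, Real.exp (1 / (t ^ 2 - 1)))
    (hdef₁ : ∀ t : ℝ, |t| < 1 → w_e t = Real.exp (1 / (t ^ 2 - 1)))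
    (hdef₂ : ∀ t : ℝ, 1 ≤ |t| → w_e t = 0) :
    ∀ n : ℕ, 1 ≤ n → ∀ f : ℝ → ℝ, ContDiff ℝ (n : ℕ∞) f → ∀ x₀ : ℝ,
      Tendsto (fun h : ℝ => (-1 / h) ^ n * (1 / K) *
          ∫ t in (-1 : ℝ)..1, iteratedDeriv n w_e t * f (x₀ + h * t))
        (𝓝[>] (0 : ℝ)) (𝓝 (iteratedDeriv n f x₀)) := by
  intro n _ f hf x₀
  have hw (k : ℕ) : ContDiff ℝ k w_e := by
    rw [eq_expNegInvGlue_one_sub_sq hdef₁ hdef₂]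
    exact expNegInvGlue.contDiff.comp (by fun_prop)
  have hK_eq : K = ∫ t in (-1 : ℝ)..1, w_e t :=
    hK ▸ integral_congr_Ioo_of_le (by norm_num) fun t ht ↦ (hdef₁ t (abs_lt.2 ht)).symm
  have hK_pos : 0 < K := hK_eq ▸ intervalIntegral_pos_of_pos_on
    ((hw 0).continuous.intervalIntegrable _ _)
    (fun t ht ↦ hdef₁ t (abs_lt.2 ht) ▸ Real.exp_pos _) (by norm_num)
  have h_neg_one (k : ℕ) : iteratedDeriv k w_e (-1) = 0 :=
    iteratedDeriv_eq_zero_of_eqOn_zero (uniqueDiffOn_Iic _) (hw k).contDiffAt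
      (fun t ht ↦ hdef₂ t (le_abs.2 (Or.inr (le_neg_of_le_neg ht)))) Set.self_mem_Iic
  have h_one (k : ℕ) : iteratedDeriv k w_e 1 = 0 :=
    iteratedDeriv_eq_zero_of_eqOn_zero (uniqueDiffOn_Ici _) (hw k).contDiffAt
      (fun t ht ↦ hdef₂ t (le_abs.2 (Or.inl ht))) Set.self_mem_Ici
  have hlim := ((tendsto_neg_one_div_pow_mul_integral_iteratedDeriv_mul (hw n)
    (fun k _ ↦ h_neg_one k) (fun k _ ↦ h_one k) (mod_cast hf) x₀).const_mul (1 / K)).mono_left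
    (nhdsWithin_mono _ fun h (hh : 0 < h) ↦ hh.ne')
  rw [← hK_eq, ← mul_assoc, one_div_mul_cancel hK_pos.ne', one_mul] at hlim
  exact hlim.congr fun h ↦ by ring
end

section
/- For every t ∈ (−1, 1), the derivative of the function t ↦ exp(1/(t² − 1)) at t equals −2t/((t² − 1)²) · exp(1/(t² − 1)). Consequently, with K = ∫_{-1}^{1} exp(1/(t²−1)) dt, for every continuously differentiable f : ℝ → ℝ and every x₀ ∈ ℝ, f'(x₀) = lim_{h → 0⁺} (2/(hK)) ∫_{-1}^{1} ( t/((t−1)²(t+1)²) ) · exp(1/(t² − 1)) · f(x₀ + h t) dt. -/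
open Filter Topology intervalIntegral Set
open MeasureTheory (volume ae_of_all)

/-!
With `w = expBump` the smooth bump (`w(t) = exp (1 / (t² - 1))` on `(-1, 1)`), the kernel
`k(t) = t / ((t - 1)² (t + 1)²) · w(t)` is `-w'/2`. Hence `∫ k = 0` by the fundamental theorem
of calculus and `∫ t k(t) dt = K / 2` by parts. The first identity lets us subtract `f x₀`:
`(2 / (h K)) ∫ k(t) f(x₀ + h t) dt = (2 / K) ∫ k(t) (f(x₀ + h t) - f x₀) / h dt`,
and since `f` is Lipschitz near `x₀`, dominated convergence sends this to
`(2 / K) f'(x₀) ∫ t k(t) dt = f'(x₀)`.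
-/

theorem hasDerivAt_exp_one_div_sq_sub_one {t : ℝ} (ht : t ^ 2 ≠ 1) :
    HasDerivAt (fun s : ℝ => Real.exp (1 / (s ^ 2 - 1)))
      (-2 * t / (t ^ 2 - 1) ^ 2 * Real.exp (1 / (t ^ 2 - 1))) t := by
  have hinv : HasDerivAt (fun s : ℝ => 1 / (s ^ 2 - 1)) (-(2 * t) / (t ^ 2 - 1) ^ 2) t := by
    simpa [one_div] using ((hasDerivAt_pow 2 t).sub_const 1).fun_inv (sub_ne_zero.mpr ht)
  convert hinv.exp using 1
  ring

/-- `exp (1 / (t ^ 2 - 1))` on `(-1, 1)`, extended by `0`. Unlike the literal formula, which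
takes the value `exp 0 = 1` at `±1` in Lean, this is smooth on `ℝ`. -/
noncomputable def expBump (t : ℝ) : ℝ := expNegInvGlue (1 - t ^ 2)

namespace expBump

theorem contDiff {n : ℕ∞} : ContDiff ℝ n expBump :=
  expNegInvGlue.contDiff.comp (contDiff_const.sub (contDiff_id.pow 2))

theorem eq_exp {t : ℝ} (ht : t ∈ Ioo (-1 : ℝ) 1) :
    expBump t = Real.exp (1 / (t ^ 2 - 1)) := by
  have hpos : 0 < 1 - t ^ 2 := by nlinarith [ht.1, ht.2]
  rw [expBump, expNegInvGlue, if_neg hpos.not_ge, ← inv_neg, neg_sub, one_div]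

theorem eq_zero_of_one_le_sq {t : ℝ} (ht : 1 ≤ t ^ 2) : expBump t = 0 :=
  expNegInvGlue.zero_of_nonpos (sub_nonpos.mpr ht)

theorem hasDerivAt {t : ℝ} (ht : t ∈ Ioo (-1 : ℝ) 1) :
    HasDerivAt expBump (-2 * t / (t ^ 2 - 1) ^ 2 * Real.exp (1 / (t ^ 2 - 1))) t := by
  refine (hasDerivAt_exp_one_div_sq_sub_one ?_).congr_of_eventuallyEq ?_
  · nlinarith [ht.1, ht.2]
  · filter_upwards [isOpen_Ioo.mem_nhds ht] with s hs using eq_exp hs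

/-- `expBump` is nonnegative, so its zeros are minima. -/
theorem deriv_eq_zero_of_eq_zero {t : ℝ} (ht : expBump t = 0) : deriv expBump t = 0 :=
  IsLocalMin.deriv_eq_zero <| Eventually.of_forall fun _ => ht ▸ expNegInvGlue.nonneg _

theorem kernel_eqOn_neg_deriv_div_two :
    EqOn (fun t : ℝ => t / ((t - 1) ^ 2 * (t + 1) ^ 2) * Real.exp (1 / (t ^ 2 - 1)))
      (fun t => -deriv expBump t / 2) (Icc (-1) 1) := by
  intro t ht
  dsimp only
  rcases eq_endpoints_or_mem_Ioo_of_mem_Icc ht with rfl | rfl | ht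
  · rw [deriv_eq_zero_of_eq_zero (eq_zero_of_one_le_sq (t := -1) (by norm_num))]
    norm_num
  · rw [deriv_eq_zero_of_eq_zero (eq_zero_of_one_le_sq (t := 1) (by norm_num))]
    norm_num
  · rw [(hasDerivAt ht).deriv]
    ring

theorem integral_deriv : ∫ t in (-1 : ℝ)..1, deriv expBump t = 0 := by
  rw [integral_deriv_eq_sub (fun t _ => contDiff.differentiable one_ne_zero t)
      (contDiff.continuous_deriv_one.intervalIntegrable _ _),
    eq_zero_of_one_le_sq (by norm_num), eq_zero_of_one_le_sq (by norm_num), sub_zero]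

theorem integral_mul_deriv :
    ∫ t in (-1 : ℝ)..1, t * deriv expBump t = -∫ t in (-1 : ℝ)..1, expBump t := by
  have hd : Differentiable ℝ expBump := contDiff.differentiable one_ne_zero
  rw [integral_mul_deriv_eq_deriv_mul (fun t _ => hasDerivAt_id' t)
      (fun t _ => (hd t).hasDerivAt) intervalIntegrable_const
      (contDiff.continuous_deriv_one.intervalIntegrable _ _),
    eq_zero_of_one_le_sq (by norm_num), eq_zero_of_one_le_sq (by norm_num)]
  simp

theorem integral_pos : 0 < ∫ t in (-1 : ℝ)..1, expBump t :=
  intervalIntegral_pos_of_pos_on ((contDiff (n := 0)).continuous.intervalIntegrable _ _)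
    (fun t ht => expNegInvGlue.pos_of_pos (by nlinarith [ht.1, ht.2])) (by norm_num)

theorem integral_exp_eq :
    ∫ t in (-1 : ℝ)..1, Real.exp (1 / (t ^ 2 - 1)) = ∫ t in (-1 : ℝ)..1, expBump t :=
  integral_congr_Ioo_of_le (by norm_num) fun _ ht => (eq_exp ht).symm

end expBump

theorem tendsto_integral_mul_slope {k : ℝ → ℝ} (hk : IntervalIntegrable k volume (-1) 1)
    {f : ℝ → ℝ} (hf : ContDiff ℝ 1 f) (x₀ : ℝ) :
    Tendsto (fun h => ∫ t in (-1 : ℝ)..1, k t * ((f (x₀ + h * t) - f x₀) / h)) (𝓝[>] 0)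
      (𝓝 (∫ t in (-1 : ℝ)..1, k t * (t * deriv f x₀))) := by
  obtain ⟨C, s, hs, hlip⟩ := hf.contDiffAt.exists_lipschitzOnWith (x := x₀)
  obtain ⟨ε, hε, hball⟩ := Metric.mem_nhds_iff.mp hs
  refine tendsto_integral_filter_of_dominated_convergence (fun t => C * ‖k t‖) ?_ ?_
    (hk.norm.const_mul _) ?_
  · refine Eventually.of_forall fun h => hk.def'.aestronglyMeasurable.mul ?_
    exact ((hf.continuous.comp (by fun_prop)).sub continuous_const |>.div_const h)
      |>.aestronglyMeasurable
  · filter_upwards [Ioo_mem_nhdsGT hε] with h hh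
    refine ae_of_all _ fun t ht => ?_
    rw [uIoc_of_le (by norm_num)] at ht
    have hta : |t| ≤ 1 := abs_le.mpr ⟨ht.1.le, ht.2⟩
    have hmem : x₀ + h * t ∈ s := hball <| by
      rw [Metric.mem_ball, Real.dist_eq, add_sub_cancel_left, abs_mul, abs_of_pos hh.1]
      calc h * |t| ≤ h * 1 := by gcongr; exact hh.1.le
        _ < ε := by linarith [hh.2]
    have hL : |f (x₀ + h * t) - f x₀| ≤ C * (h * |t|) := by
      have := hlip.dist_le_mul _ hmem _ (hball (Metric.mem_ball_self hε))
      rwa [Real.dist_eq, Real.dist_eq, add_sub_cancel_left, abs_mul, abs_of_pos hh.1] at this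
    rw [Real.norm_eq_abs, Real.norm_eq_abs, abs_mul, abs_div, abs_of_pos hh.1, mul_comm (C : ℝ)]
    gcongr
    rw [div_le_iff₀ hh.1]
    calc |f (x₀ + h * t) - f x₀| ≤ C * (h * |t|) := hL
      _ ≤ C * h := by gcongr; exact mul_le_of_le_one_right hh.1.le hta
  · refine ae_of_all _ fun t _ => Tendsto.const_mul (k t) ?_
    have hd : HasDerivAt (fun h => f (x₀ + h * t)) (deriv f x₀ * t) 0 := by
      have hfd : HasDerivAt f (deriv f x₀) (x₀ + 0 * t) := by
        simpa using (hf.differentiable one_ne_zero x₀).hasDerivAt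
      have hlin : HasDerivAt (fun h : ℝ => x₀ + h * t) t 0 := by
        simpa using ((hasDerivAt_id' (0 : ℝ)).mul_const t).const_add x₀
      exact hfd.comp (0 : ℝ) hlin
    simpa [div_eq_inv_mul, mul_comm t] using hd.tendsto_slope_zero_right

theorem tendsto_inv_mul_integral_mul_comp {k : ℝ → ℝ}
    (hk : IntervalIntegrable k volume (-1) 1) (hk₀ : ∫ t in (-1 : ℝ)..1, k t = 0)
    {f : ℝ → ℝ} (hf : ContDiff ℝ 1 f) (x₀ : ℝ) :
    Tendsto (fun h => h⁻¹ * ∫ t in (-1 : ℝ)..1, k t * f (x₀ + h * t)) (𝓝[>] 0)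
      (𝓝 (deriv f x₀ * ∫ t in (-1 : ℝ)..1, t * k t)) := by
  have hlim := tendsto_integral_mul_slope hk hf x₀
  have hval : ∫ t in (-1 : ℝ)..1, k t * (t * deriv f x₀) =
      deriv f x₀ * ∫ t in (-1 : ℝ)..1, t * k t := by
    rw [← integral_const_mul]
    congr 1 with t
    ring
  rw [hval] at hlim
  refine hlim.congr fun h => ?_
  have hkf : IntervalIntegrable (fun t => k t * f (x₀ + h * t)) volume (-1) 1 :=
    hk.mul_continuousOn (hf.continuous.comp (by fun_prop)).continuousOn
  calc ∫ t in (-1 : ℝ)..1, k t * ((f (x₀ + h * t) - f x₀) / h)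
      = ∫ t in (-1 : ℝ)..1, (h⁻¹ * (k t * f (x₀ + h * t)) - h⁻¹ * f x₀ * k t) := by
        congr 1 with t
        ring
    _ = h⁻¹ * ∫ t in (-1 : ℝ)..1, k t * f (x₀ + h * t) := by
        rw [integral_sub (hkf.const_mul _) (hk.const_mul _), integral_const_mul,
          integral_const_mul, hk₀, mul_zero, sub_zero]

/-- Explicit first-derivative bump kernel: on `(−1,1)` the derivative of
`t ↦ exp(1/(t²−1))` is `−2t/((t²−1)²) · exp(1/(t²−1))`, and consequently, with
`K = ∫_{-1}^{1} exp(1/(t²−1)) dt`, for every continuously differentiable `f` and every `x₀`,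
`f'(x₀) = lim_{h→0⁺} (2/(hK)) ∫_{-1}^{1} (t/((t−1)²(t+1)²)) exp(1/(t²−1)) f(x₀+ht) dt`. -/
theorem bump_first_derivative_kernel (K : ℝ)
    (hK : K = ∫ t in (-1 : ℝ)..1, Real.exp (1 / (t ^ 2 - 1))) :
    (∀ t ∈ Ioo (-1 : ℝ) 1,
      HasDerivAt (fun s : ℝ => Real.exp (1 / (s ^ 2 - 1)))
        (-2 * t / (t ^ 2 - 1) ^ 2 * Real.exp (1 / (t ^ 2 - 1))) t) ∧
    ∀ f : ℝ → ℝ, ContDiff ℝ 1 f → ∀ x₀ : ℝ,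
      Tendsto (fun h : ℝ => (2 / (h * K)) *
          ∫ t in (-1 : ℝ)..1,
            (t / ((t - 1) ^ 2 * (t + 1) ^ 2)) * Real.exp (1 / (t ^ 2 - 1)) * f (x₀ + h * t))
        (𝓝[>] (0 : ℝ)) (𝓝 (deriv f x₀)) := by
  refine ⟨fun t ht => hasDerivAt_exp_one_div_sq_sub_one (by nlinarith [ht.1, ht.2]),
    fun f hf x₀ => ?_⟩
  rw [expBump.integral_exp_eq] at hK
  have hK₀ : K ≠ 0 := hK ▸ expBump.integral_pos.ne'
  have hk : IntervalIntegrable (fun t => -deriv expBump t / 2) volume (-1) 1 :=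
    (expBump.contDiff.continuous_deriv_one.neg.div_const 2).intervalIntegrable _ _
  have hk₀ : ∫ t in (-1 : ℝ)..1, -deriv expBump t / 2 = 0 := by
    rw [integral_div, integral_neg, expBump.integral_deriv, neg_zero, zero_div]
  have hmoment : ∫ t in (-1 : ℝ)..1, t * (-deriv expBump t / 2) = K / 2 := by
    simp only [mul_div_assoc', mul_neg]
    rw [integral_div, integral_neg, expBump.integral_mul_deriv, neg_neg, hK]
  have hlim := (tendsto_inv_mul_integral_mul_comp hk hk₀ hf x₀).const_mul (2 / K)
  rw [hmoment, show 2 / K * (deriv f x₀ * (K / 2)) = deriv f x₀ by field_simp] at hlim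
  refine hlim.congr fun h => ?_
  have hkernel := expBump.kernel_eqOn_neg_deriv_div_two
  rw [← uIcc_of_le (by norm_num)] at hkernel
  rw [integral_congr fun t ht => congrArg (· * f (x₀ + h * t)) (hkernel ht)]
  ring
end

section
/- For every natural number n, ∫_{-1}^{1} (x² − 1)ⁿ dx = (−1)ⁿ · 2^{2n+1} · (n!)² / (2n+1)!. -/
open intervalIntegral

/-!
Differentiating `x (x² - 1)ⁿ⁺¹` gives `(2n + 3) (x² - 1)ⁿ⁺¹ + (2n + 2) (x² - 1)ⁿ`, and
`x (x² - 1)ⁿ⁺¹` vanishes at `±1`. Hence `Iₙ = ∫_{-1}^{1} (x² - 1)ⁿ` satisfies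
`(2n + 3) Iₙ₊₁ = -(2n + 2) Iₙ` with `I₀ = 2`, which is also the recursion of the closed form.
-/

lemma hasDerivAt_mul_sq_sub_one_pow_succ (n : ℕ) (x : ℝ) :
    HasDerivAt (fun x : ℝ => x * (x ^ 2 - 1) ^ (n + 1))
      ((2 * n + 3) * (x ^ 2 - 1) ^ (n + 1) + (2 * n + 2) * (x ^ 2 - 1) ^ n) x := by
  refine ((hasDerivAt_id x).mul (((hasDerivAt_pow 2 x).sub_const 1).pow (n + 1))).congr_deriv ?_
  simp only [id_eq, Pi.pow_apply, Nat.add_sub_cancel]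
  push_cast
  ring

lemma integral_sq_sub_one_pow_succ (n : ℕ) :
    ∫ x in (-1 : ℝ)..1, (x ^ 2 - 1) ^ (n + 1)
      = -(2 * n + 2 : ℝ) / (2 * n + 3) * ∫ x in (-1 : ℝ)..1, (x ^ 2 - 1) ^ n := by
  have h := integral_eq_sub_of_hasDerivAt (a := -1) (b := 1)
    (fun x _ => hasDerivAt_mul_sq_sub_one_pow_succ n x)
    (Continuous.intervalIntegrable (by fun_prop) _ _)
  rw [integral_add (Continuous.intervalIntegrable (by fun_prop) _ _)
    (Continuous.intervalIntegrable (by fun_prop) _ _), integral_const_mul, integral_const_mul] at h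
  norm_num at h
  field_simp
  linarith

lemma factorial_two_mul_succ_add_one (n : ℕ) :
    (2 * (n + 1) + 1).factorial = (2 * n + 3) * (2 * n + 2) * (2 * n + 1).factorial := by
  rw [show 2 * (n + 1) + 1 = 2 * n + 1 + 1 + 1 by ring, Nat.factorial_succ, Nat.factorial_succ]
  ring

/-- `∫_{-1}^{1} (x²−1)ⁿ dx = (−1)ⁿ 2^{2n+1} (n!)² / (2n+1)!`. -/
theorem integral_sq_sub_one_pow (n : ℕ) :
    ∫ x in (-1 : ℝ)..1, (x ^ 2 - 1) ^ n
      = (-1 : ℝ) ^ n * 2 ^ (2 * n + 1) * (n.factorial : ℝ) ^ 2 / ((2 * n + 1).factorial : ℝ) := by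
  induction n with
  | zero => norm_num
  | succ n ih =>
    rw [integral_sq_sub_one_pow_succ, ih, Nat.factorial_succ n, factorial_two_mul_succ_add_one]
    push_cast
    field_simp
    ring
end
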